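/- arXiv:1912.09967 — 2 statements merged into one kernel-verified Lean document; each statement's English description precedes it below -/
import Mathlib

section
/- Let 0 < h < 1/10 and let ω be a real number with ω ≥ 1/h. Then 2·arsinh((ω-1)/2) ≥ 2·arsinh(h·ω/2) + 2·arsinh((1/h - 1)/6). -/
lemma sqrt_one_add_sq_le (t : ℝ) (ht : 0 ≤ t) : Real.sqrt (1 + t ^ 2) ≤ 1 + t := by
  rw [show (1 : ℝ) + t = Real.sqrt ((1 + t) ^ 2) by rw [Real.sqrt_sq (by linarith)]]
  exact Real.sqrt_le_sqrt (by nlinarith)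

lemma arsinh_add_le {x y z : ℝ} (hx : 0 ≤ x) (hy : 0 ≤ y)
    (hz : x + y + 2 * x * y ≤ z) :
    Real.arsinh x + Real.arsinh y ≤ Real.arsinh z := by
  have key : Real.sinh (Real.arsinh x + Real.arsinh y) ≤ z := by
    rw [Real.sinh_add, Real.sinh_arsinh, Real.sinh_arsinh, Real.cosh_arsinh,
      Real.cosh_arsinh]
    have h1 : Real.sqrt (1 + y ^ 2) ≤ 1 + y := sqrt_one_add_sq_le y hy
    have h2 : Real.sqrt (1 + x ^ 2) ≤ 1 + x := sqrt_one_add_sq_le x hx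
    nlinarith [Real.sqrt_nonneg (1 + y ^ 2), Real.sqrt_nonneg (1 + x ^ 2)]
  calc Real.arsinh x + Real.arsinh y
      = Real.arsinh (Real.sinh (Real.arsinh x + Real.arsinh y)) := by
        rw [Real.arsinh_sinh]
    _ ≤ Real.arsinh z := Real.arsinh_le_arsinh.mpr key

theorem strand_length_gap (h ω : ℝ) (h0 : 0 < h) (h10 : h < 1 / 10) (hω : 1 / h ≤ ω) :
    2 * Real.arsinh ((ω - 1) / 2) ≥
      2 * Real.arsinh (h * ω / 2) + 2 * Real.arsinh ((1 / h - 1) / 6) := by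
  have hinv : (10 : ℝ) < 1 / h := (lt_div_iff₀ h0).mpr (by linarith)
  have hω1 : (10 : ℝ) < ω := lt_of_lt_of_le hinv hω
  have hhω : 1 ≤ h * ω := by
    have := (div_le_iff₀ h0).mp hω
    linarith [mul_comm ω h]
  have ha : 0 ≤ h * ω / 2 := by positivity
  have hc : 0 ≤ (1 / h - 1) / 6 := by linarith
  have key : h * ω / 2 + (1 / h - 1) / 6 + 2 * (h * ω / 2) * ((1 / h - 1) / 6)
      ≤ (ω - 1) / 2 := by
    have e : 2 * (h * ω / 2) * ((1 / h - 1) / 6) = (ω * (1 - h)) / 6 := by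
      field_simp
    rw [e]
    rw [div_le_iff₀ h0] at hω
    -- need: 3hω - 3h²ω + (1-h) + hω(1-h) ≤ 3h(ω-1) scaled... just nlinarith
    nlinarith [mul_pos h0 (by linarith : (0:ℝ) < ω), sq_nonneg h,
      mul_le_mul_of_nonneg_right hω (by linarith : (0:ℝ) ≤ 1 - h)]
  have := arsinh_add_le ha hc key
  linarith
end

section
/- Let h ≥ 1 and let n ≥ 1 be a natural number, and let a ≥ b ≥ 17h be real numbers. If arsinh((a + n²·b)/2) > arsinh((a-1)·(b-1)/(30h)), then a < 272·h·n². -/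
theorem winding_number_bound_arsinh (h : ℝ) (hh : 1 ≤ h) (n : ℕ) (hn : 1 ≤ n)
    (a b : ℝ) (hab : b ≤ a) (hb : 17 * h ≤ b)
    (hineq : Real.arsinh ((a + (n : ℝ) ^ 2 * b) / 2) >
      Real.arsinh ((a - 1) * (b - 1) / (30 * h))) :
    a < 272 * h * (n : ℝ) ^ 2 := by
  have hn1 : (1 : ℝ) ≤ (n : ℝ) := by exact_mod_cast hn
  have hkey : (a - 1) * (b - 1) / (30 * h) < (a + (n : ℝ) ^ 2 * b) / 2 :=
    Real.arsinh_lt_arsinh.mp hineq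
  have hhpos : (0 : ℝ) < 30 * h := by linarith
  have hkey2 : (a - 1) * (b - 1) < 15 * h * (a + (n : ℝ) ^ 2 * b) := by
    rw [div_lt_div_iff₀ hhpos (by norm_num : (0:ℝ) < 2)] at hkey
    nlinarith [hkey]
  by_contra hcon
  push_neg at hcon
  nlinarith [mul_pos (by nlinarith : (0:ℝ) < a - 272 * h * (n:ℝ)^2 + 0) hhpos,
    sq_nonneg ((n:ℝ) - 1), mul_le_mul hcon hb (by linarith) (by nlinarith),
    mul_nonneg (mul_nonneg (by linarith : (0:ℝ) ≤ h) (by nlinarith : (0:ℝ) ≤ (n:ℝ)^2 - 1)) (by linarith : (0:ℝ) ≤ b - 17 * h)]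
end
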